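/- For the MacLane configuration C₈, the element a₀ ∈ A whose only nonzero values are a₀(4, p₄₅) = x₇ − x₆ − x₃, a₀(2, p₂₃) = −x₅, and a₀(6, p₂₄₆) = −x₇ does not lie in the subgroup U + B of A. (Equivalently, the image of a₀ in W = A/(U+B) is non-zero.) -/

import Mathlib

open scoped Classical

/- The MacLane configuration `C₈`.  The generator index `i : Fin 7` corresponds to the
line `l_{i+1}`, and the point index `q : Fin 8` enumerates the points of `𝒫₀` in the
order `p₁₃₅, p₁₄₇, p₁₆, p₂₃, p₂₄₆, p₂₅₇, p₃₆₇, p₄₅`. -/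

/-- `through q` is the set of generator indices `i` (for lines `l_{i+1}`) passing
through the point `q ∈ 𝒫₀`. -/
def through : Fin 8 → Finset (Fin 7) :=
  ![{0, 2, 4},   -- p₁₃₅ :  l₁, l₃, l₅
    {0, 3, 6},   -- p₁₄₇ :  l₁, l₄, l₇
    {0, 5},      -- p₁₆  :  l₁, l₆
    {1, 2},      -- p₂₃  :  l₂, l₃
    {1, 3, 5},   -- p₂₄₆ :  l₂, l₄, l₆
    {1, 4, 6},   -- p₂₅₇ :  l₂, l₅, l₇
    {2, 5, 6},   -- p₃₆₇ :  l₃, l₆, l₇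
    {3, 4}]      -- p₄₅  :  l₄, l₅

/-- `𝒜 = {(i,q) : l_{i+1} incident to q}`. -/
def A8 : Type := {z : Fin 7 × Fin 8 // z.1 ∈ through z.2}

/-- The free Lie ring on `x₁, …, x₇` (`x i` is `x_{i+1}`). -/
abbrev L8 := FreeLieAlgebra ℤ (Fin 7)

noncomputable def x (i : Fin 7) : L8 := FreeLieAlgebra.of ℤ i

/-- The embedding of `H = ℤ⁷` into the free Lie ring, `v ↦ Σᵢ vᵢ • xᵢ`. -/
noncomputable def hmap (v : Fin 7 → ℤ) : L8 := ∑ i, v i • x i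

/-- `s_q = Σ_{j : l_{j+1} incident to q} x_j`. -/
noncomputable def s (q : Fin 8) : L8 := ∑ j ∈ through q, x j

/-- The additive subgroup `R₂ ⊆ L`, spanned by the `[xᵢ, s_q]`, `(i,q) ∈ 𝒜`. -/
noncomputable def R2 : AddSubgroup L8 :=
  AddSubgroup.closure {y | ∃ z : A8, y = ⁅x z.val.1, s z.val.2⁆}

/-- The additive subgroup `R₃ = [H, R₂] ⊆ L`. -/
noncomputable def R3 : AddSubgroup L8 :=
  AddSubgroup.closure {y | ∃ (k : Fin 7) (r : L8), r ∈ R2 ∧ y = ⁅x k, r⁆}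

/-- `s_q` as an element of `H = ℤ⁷`. -/
def sH (q : Fin 8) : Fin 7 → ℤ := fun k => if k ∈ through q then 1 else 0

/-- `A = H^𝒜`, the abelian group of functions `𝒜 → H`. -/
abbrev A := A8 → (Fin 7 → ℤ)

/-- `a⁽⁰⁾_{i,q}(j,r) = δ_{ij} δ_{qr} xᵢ` for `(i,q) ∈ 𝒜`. -/
noncomputable def a0 (z : A8) : A :=
  fun w => if w.val = z.val then Pi.single z.val.1 1 else 0

/-- `a⁽¹⁾_{i,q}(j,r) = δ_{qr} xᵢ` for `i : Fin 7`, `q ∈ 𝒫₀`. -/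
noncomputable def a1 (i : Fin 7) (q : Fin 8) : A :=
  fun w => if w.val.2 = q then Pi.single i 1 else 0

/-- `a⁽²⁾_{i,q₁,q₂}(j,r) = δ_{ij} δ_{q₁ r} s_{q₂}` for `(i,q₁), (i,q₂) ∈ 𝒜`. -/
noncomputable def a2 (i : Fin 7) (q₁ q₂ : Fin 8) : A :=
  fun w => if w.val = (i, q₁) then sH q₂ else 0

/-- The subgroup `U ⊆ A` generated by the `a⁽⁰⁾`, `a⁽¹⁾`, `a⁽²⁾`. -/
noncomputable def U : AddSubgroup A :=
  AddSubgroup.closure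
    ({f | ∃ z : A8, f = a0 z} ∪
     {f | ∃ (i : Fin 7) (q : Fin 8), f = a1 i q} ∪
     {f | ∃ (i : Fin 7) (q₁ q₂ : Fin 8), i ∈ through q₁ ∧ i ∈ through q₂ ∧
        f = a2 i q₁ q₂})

/-- `τ(a; i, q) = [[xᵢ, a(i,q)], s_q] + [xᵢ, Σ_{j : l_j ∋ q} [x_j, a(j,q)]]`. -/
noncomputable def tau (a : A) (z : A8) : L8 :=
  ⁅⁅x z.val.1, hmap (a z)⁆, s z.val.2⁆ +
    ⁅x z.val.1, ∑ j : Fin 7,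
      if h : j ∈ through z.val.2 then ⁅x j, hmap (a ⟨(j, z.val.2), h⟩)⁆ else 0⁆

/-- The subgroup `B ⊆ A` of functions `a(i,q)` not depending on the point `q`. -/
def B : AddSubgroup A where
  carrier := {a | ∀ z w : A8, z.val.1 = w.val.1 → a z = a w}
  add_mem' := by
    intro a b ha hb z w h
    simp only [Pi.add_apply, ha z w h, hb z w h]
  zero_mem' := by intro z w h; rfl
  neg_mem' := by
    intro a ha z w h
    simp only [Pi.neg_apply, ha z w h]

/-- The element `a₀ = ḡ⁺ − ḡ⁻ : 𝒜 → H`, whose only nonzero values are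
`a₀(4, p₄₅) = x₇ − x₆ − x₃`, `a₀(2, p₂₃) = −x₅` and `a₀(6, p₂₄₆) = −x₇`.
(In our indexing: line `l₄` is `3 : Fin 7`, `l₂` is `1`, `l₆` is `5`; the points
`p₄₅, p₂₃, p₂₄₆` are `7, 3, 4 : Fin 8`.) -/
noncomputable def aZero : A := fun z =>
  if z.val = ((3 : Fin 7), (7 : Fin 8)) then
    Pi.single (6 : Fin 7) 1 - Pi.single (5 : Fin 7) 1 - Pi.single (2 : Fin 7) 1
  else if z.val = ((1 : Fin 7), (3 : Fin 8)) then -Pi.single (4 : Fin 7) 1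
  else if z.val = ((5 : Fin 7), (4 : Fin 8)) then -Pi.single (6 : Fin 7) 1
  else 0

/-! An additive map `φ : A → 𝔽₃` separates `a₀` from `U + B`. Taking
`φ(a) = Σᵢ cᵢ (a(i, pᵢ) − a(i, nᵢ))` for two points `pᵢ, nᵢ` on each line `lᵢ` makes `φ`
vanish on `B`. It kills the `a⁽⁰⁾_{i,q}` and `a⁽²⁾_{i,q₁,q₂}` as soon as `cᵢ(xᵢ) = 0` and
`cᵢ(s_q) = 0` for every `q` on `lᵢ`, and the `a⁽¹⁾_{k,q}` when, at each point `q`, the `cᵢ`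
with `pᵢ = q` and those with `nᵢ = q` have the same sum. Such data exist over `𝔽₃`
with `φ(a₀) ≠ 0`. -/

def A8.mk (i : Fin 7) (q : {q : Fin 8 // i ∈ through q}) : A8 := ⟨(i, q.1), q.2⟩

section LineDifference

variable {R : Type*} [AddCommGroup R] (c : Fin 7 → (Fin 7 → ℤ) →+ R)
  (p n : (i : Fin 7) → {q : Fin 8 // i ∈ through q})

def lineDifference : A →+ R :=
  ∑ i, ((c i).comp (Pi.evalAddMonoidHom _ (A8.mk i (p i))) -
    (c i).comp (Pi.evalAddMonoidHom _ (A8.mk i (n i))))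

lemma lineDifference_apply (a : A) :
    lineDifference c p n a = ∑ i, (c i (a (A8.mk i (p i))) - c i (a (A8.mk i (n i)))) := by
  simp [lineDifference]

lemma B_le_ker_lineDifference : B ≤ (lineDifference c p n).ker := by
  intro a ha
  rw [AddMonoidHom.mem_ker, lineDifference_apply]
  exact Finset.sum_eq_zero fun i _ => sub_eq_zero.2 (congrArg (c i) (ha _ _ rfl))

lemma lineDifference_a0 (hc : ∀ i, c i (Pi.single i 1) = 0) (z : A8) :
    lineDifference c p n (a0 z) = 0 := by
  have key : ∀ i q, c i (a0 z (A8.mk i q)) = 0 := by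
    intro i q
    unfold a0
    split_ifs with h
    · obtain rfl : i = z.val.1 := congrArg Prod.fst h
      exact hc _
    · exact map_zero _
  simp [lineDifference_apply, key]

lemma lineDifference_a1 (k : Fin 7) (q : Fin 8) :
    lineDifference c p n (a1 k q) = ∑ i,
      ((if (p i).1 = q then c i (Pi.single k 1) else 0) -
        (if (n i).1 = q then c i (Pi.single k 1) else 0)) := by
  have key : ∀ i r, c i (a1 k q (A8.mk i r)) = if r.1 = q then c i (Pi.single k 1) else 0 := by
    intro i r
    change c i (if r.1 = q then _ else 0) = _
    split_ifs <;> simp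
  simp only [lineDifference_apply, key]

lemma lineDifference_a2 (hs : ∀ i q, i ∈ through q → c i (sH q) = 0) {i : Fin 7}
    (q₁ : Fin 8) {q₂ : Fin 8} (h₂ : i ∈ through q₂) : lineDifference c p n (a2 i q₁ q₂) = 0 := by
  have key : ∀ j q, c j (a2 i q₁ q₂ (A8.mk j q)) = 0 := by
    intro j q
    unfold a2
    split_ifs with h
    · obtain rfl : j = i := congrArg Prod.fst h
      exact hs _ _ h₂
    · exact map_zero _
  simp [lineDifference_apply, key]

end LineDifference

namespace Obstruction

/- Lines `l₄, l₅` carry `u + w`, so that the balance at `p₁₃₅` and `p₂₄₆`, the points where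
three of the chosen `pᵢ, nᵢ` meet, reads `u + w = u + w`. -/

def u : Fin 7 → ZMod 3 := ![0, -1, 1, 1, -1, 0, -1]

def w : Fin 7 → ZMod 3 := ![-1, 0, 0, -1, 1, 1, -1]

def form (i : Fin 7) : (Fin 7 → ℤ) →+ ZMod 3 :=
  (Fintype.linearCombination ℤ (![u, w, w, u + w, u + w, u, 0] i)).toAddMonoidHom

def pos (i : Fin 7) : {q : Fin 8 // i ∈ through q} :=
  ⟨![0, 3, 0, 4, 7, 2, 1] i, by fin_cases i <;> decide⟩

def neg (i : Fin 7) : {q : Fin 8 // i ∈ through q} :=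
  ⟨![2, 4, 3, 7, 0, 4, 1] i, by fin_cases i <;> decide⟩

lemma form_single_self : ∀ i, form i (Pi.single i 1) = 0 := by decide

lemma form_sH : ∀ i q, i ∈ through q → form i (sH q) = 0 := by decide

lemma balanced : ∀ (k : Fin 7) (q : Fin 8), ∑ i,
    ((if (pos i).1 = q then form i (Pi.single k 1) else 0) -
      (if (neg i).1 = q then form i (Pi.single k 1) else 0)) = 0 := by
  decide

end Obstruction

def obstruction : A →+ ZMod 3 := lineDifference Obstruction.form Obstruction.pos Obstruction.neg

lemma obstruction_aZero : obstruction aZero ≠ 0 := by decide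

lemma U_le_ker_obstruction : U ≤ obstruction.ker := by
  rw [U, AddSubgroup.closure_le]
  rintro f ((⟨z, rfl⟩ | ⟨k, q, rfl⟩) | ⟨i, q₁, q₂, -, h₂, rfl⟩)
  · exact lineDifference_a0 _ _ _ Obstruction.form_single_self z
  · exact (lineDifference_a1 _ _ _ k q).trans (Obstruction.balanced k q)
  · exact lineDifference_a2 _ _ _ Obstruction.form_sH q₁ h₂

/-- **Lemma 3.2 of Rybnikov's paper.** For the MacLane configuration, the image of
`a₀` in `W = A/(U + B)` is non-zero, i.e. `a₀ ∉ U + B`. -/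
theorem aZero_not_in_U_sup_B : aZero ∉ U ⊔ B := fun h =>
  obstruction_aZero (sup_le U_le_ker_obstruction (B_le_ker_lineDifference _ _ _) h)
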